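/- For every integer r ≥ 1 and every integer n ≥ 0, the element b⁻ⁿa⁻ⁿd₁aⁿbⁿ of G lies in the submonoid of G generated by the two elements d₁, d₂; in particular it lies in the subgroup H of G generated by {b, d₁, d₂}. -/

import Mathlib

/-- The "progression word" `x y^(s+1) x y^(s+2) ⋯ x y^(s+r)` in a group. -/
def wordProg {G : Type*} [Group G] (x y : G) (s r : ℕ) : G :=
  ((List.range r).map (fun k => x * y ^ (s + k + 1))).prod

/-- Generators of `G`: `0 = a`, `1 = b`, `2 = c₁`, `3 = c₂`, `4 = d₁`, `5 = d₂`.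
The relators are `a⁻¹b⁻¹ab C⁻¹`, `b⁻¹cᵢb Cᵢ⁻¹`, `(ab)⁻¹d_j(ab) D_j⁻¹`, and
`cᵢ⁻¹d_jcᵢ D_{ij}⁻¹` for `1 ≤ i,j ≤ 2`, where `C = (c₁c₂)(c₁c₂²)⋯(c₁c₂^r)`,
`Cᵢ = (c₁c₂^{ri+1})⋯(c₁c₂^{ri+r})`, `D_j = (d₁d₂^{rj+1})⋯(d₁d₂^{rj+r})`, and
`D_{ij} = (d₁d₂^{r(2i+j)+1})⋯(d₁d₂^{r(2i+j)+r})`. -/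
def GRels (r : ℕ) : Set (FreeGroup (Fin 6)) :=
  { w | (w = (FreeGroup.of (0 : Fin 6))⁻¹ * (FreeGroup.of (1 : Fin 6))⁻¹ *
            FreeGroup.of (0 : Fin 6) * FreeGroup.of (1 : Fin 6) *
            (wordProg (FreeGroup.of (2 : Fin 6)) (FreeGroup.of (3 : Fin 6)) 0 r)⁻¹) ∨
        (∃ i : Fin 2,
          w = (FreeGroup.of (1 : Fin 6))⁻¹ *
              FreeGroup.of (⟨i.val + 2, by omega⟩ : Fin 6) *
              FreeGroup.of (1 : Fin 6) *
              (wordProg (FreeGroup.of (2 : Fin 6)) (FreeGroup.of (3 : Fin 6))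
                (r * (i.val + 1)) r)⁻¹) ∨
        (∃ j : Fin 2,
          w = (FreeGroup.of (0 : Fin 6) * FreeGroup.of (1 : Fin 6))⁻¹ *
              FreeGroup.of (⟨j.val + 4, by omega⟩ : Fin 6) *
              (FreeGroup.of (0 : Fin 6) * FreeGroup.of (1 : Fin 6)) *
              (wordProg (FreeGroup.of (4 : Fin 6)) (FreeGroup.of (5 : Fin 6))
                (r * (j.val + 1)) r)⁻¹) ∨
        (∃ i j : Fin 2,
          w = (FreeGroup.of (⟨i.val + 2, by omega⟩ : Fin 6))⁻¹ *
              FreeGroup.of (⟨j.val + 4, by omega⟩ : Fin 6) *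
              FreeGroup.of (⟨i.val + 2, by omega⟩ : Fin 6) *
              (wordProg (FreeGroup.of (4 : Fin 6)) (FreeGroup.of (5 : Fin 6))
                (r * (2 * (i.val + 1) + (j.val + 1))) r)⁻¹) }

/-- `G = ⟨a,b,c₁,c₂,d₁,d₂ ∣ a⁻¹b⁻¹ab = C, b⁻¹cᵢb = Cᵢ, (ab)⁻¹d_j(ab) = D_j,
cᵢ⁻¹d_jcᵢ = D_{ij}, 1 ≤ i,j ≤ 2⟩`. -/
abbrev GG (r : ℕ) := PresentedGroup (GRels r)

/-!
Let `t = ab`, and let `M_c`, `M_d` be the submonoids generated by `c₁, c₂` and by `d₁, d₂`.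
The relations say that conjugation `x ↦ g⁻¹xg` maps `M_c` into itself for `g = b`, and `M_d`
into itself for `g = t` and for `g ∈ {c₁, c₂}`, hence for every `g ∈ M_c`. From `b⁻¹ab = aC` one
gets `b⁻ᵏtbᵏ ∈ t M_c` by induction on `k`, so
`aⁿ⁺¹bⁿ⁺¹ = aⁿbⁿ · (b⁻ⁿtbⁿ) ∈ aⁿbⁿ · t · M_c`, and by induction every `aⁿbⁿ` conjugates `M_d`
into itself. In particular `(aⁿbⁿ)⁻¹d₁(aⁿbⁿ) ∈ M_d`.
-/

namespace Submonoid

variable {G : Type*} [Group G]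

def conjStabilizer (M : Submonoid G) : Submonoid G where
  carrier := {g | ∀ x ∈ M, g⁻¹ * x * g ∈ M}
  one_mem' x hx := by simpa using hx
  mul_mem' {g h} hg hh x hx := by
    rw [show (g * h)⁻¹ * x * (g * h) = h⁻¹ * (g⁻¹ * x * g) * h by group]
    exact hh _ (hg x hx)

theorem mem_conjStabilizer_closure {S : Set G} {g : G}
    (h : ∀ x ∈ S, g⁻¹ * x * g ∈ closure S) : g ∈ (closure S).conjStabilizer := by
  intro w hw
  induction hw using closure_induction with
  | mem x hx => exact h x hx
  | one => simp
  | mul x y _ _ hx hy =>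
    rw [show g⁻¹ * (x * y) * g = (g⁻¹ * x * g) * (g⁻¹ * y * g) by group]
    exact mul_mem hx hy

theorem mem_conjStabilizer_closure_pair {x y g : G}
    (hx : g⁻¹ * x * g ∈ closure {x, y}) (hy : g⁻¹ * y * g ∈ closure {x, y}) :
    g ∈ (closure {x, y}).conjStabilizer :=
  mem_conjStabilizer_closure <| by rintro z (rfl | rfl) <;> assumption

end Submonoid

section wordProg

variable {G : Type*} [Group G]

theorem map_wordProg {H : Type*} [Group H] (φ : G →* H) (x y : G) (s r : ℕ) :
    φ (wordProg x y s r) = wordProg (φ x) (φ y) s r := by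
  simp [wordProg, map_list_prod, Function.comp_def]

theorem wordProg_mem_closure (x y : G) (s r : ℕ) :
    wordProg x y s r ∈ Submonoid.closure {x, y} := by
  refine Submonoid.list_prod_mem _ fun z hz ↦ ?_
  obtain ⟨k, -, rfl⟩ := List.mem_map.1 hz
  exact mul_mem (Submonoid.subset_closure (by simp))
    (pow_mem (Submonoid.subset_closure (by simp)) _)

end wordProg

namespace GG

variable {r : ℕ}

def a : GG r := PresentedGroup.of 0
def b : GG r := PresentedGroup.of 1
/-- `c 0 = c₁`, `c 1 = c₂`. -/
def c (i : Fin 2) : GG r := PresentedGroup.of ⟨i.val + 2, by omega⟩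
/-- `d 0 = d₁`, `d 1 = d₂`. -/
def d (j : Fin 2) : GG r := PresentedGroup.of ⟨j.val + 4, by omega⟩

theorem commutator_a_b : (a : GG r)⁻¹ * b⁻¹ * a * b = wordProg (c 0) (c 1) 0 r := by
  have h := PresentedGroup.mk_eq_mk_of_mul_inv_mem (rels := GRels r) (Or.inl rfl)
  simp only [map_mul, map_inv, map_wordProg] at h
  exact h

theorem b_conj_c (i : Fin 2) :
    (b : GG r)⁻¹ * c i * b = wordProg (c 0) (c 1) (r * (i.val + 1)) r := by
  have h := PresentedGroup.mk_eq_mk_of_mul_inv_mem (rels := GRels r)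
    (Or.inr (Or.inl ⟨i, rfl⟩))
  simp only [map_mul, map_inv, map_wordProg] at h
  exact h

theorem ab_conj_d (j : Fin 2) :
    (a * b : GG r)⁻¹ * d j * (a * b) = wordProg (d 0) (d 1) (r * (j.val + 1)) r := by
  have h := PresentedGroup.mk_eq_mk_of_mul_inv_mem (rels := GRels r)
    (Or.inr (Or.inr (Or.inl ⟨j, rfl⟩)))
  simp only [map_mul, map_inv, map_wordProg] at h
  exact h

theorem c_conj_d (i j : Fin 2) :
    (c i : GG r)⁻¹ * d j * c i =
      wordProg (d 0) (d 1) (r * (2 * (i.val + 1) + (j.val + 1))) r := by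
  have h := PresentedGroup.mk_eq_mk_of_mul_inv_mem (rels := GRels r)
    (Or.inr (Or.inr (Or.inr ⟨i, j, rfl⟩)))
  simp only [map_mul, map_inv, map_wordProg] at h
  exact h

def submonoidC (r : ℕ) : Submonoid (GG r) := Submonoid.closure {c 0, c 1}
def submonoidD (r : ℕ) : Submonoid (GG r) := Submonoid.closure {d 0, d 1}

theorem b_mem_conjStabilizer_submonoidC : b ∈ (submonoidC r).conjStabilizer :=
  Submonoid.mem_conjStabilizer_closure_pair
    (b_conj_c 0 ▸ wordProg_mem_closure _ _ _ _) (b_conj_c 1 ▸ wordProg_mem_closure _ _ _ _)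

theorem ab_mem_conjStabilizer_submonoidD : a * b ∈ (submonoidD r).conjStabilizer :=
  Submonoid.mem_conjStabilizer_closure_pair
    (ab_conj_d 0 ▸ wordProg_mem_closure _ _ _ _) (ab_conj_d 1 ▸ wordProg_mem_closure _ _ _ _)

theorem submonoidC_le_conjStabilizer_submonoidD :
    submonoidC r ≤ (submonoidD r).conjStabilizer := by
  refine Submonoid.closure_le.2 ?_
  rintro _ (rfl | rfl) <;>
    exact Submonoid.mem_conjStabilizer_closure_pair
      (c_conj_d _ 0 ▸ wordProg_mem_closure _ _ _ _) (c_conj_d _ 1 ▸ wordProg_mem_closure _ _ _ _)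

theorem exists_b_pow_conj_ab (k : ℕ) :
    ∃ P ∈ submonoidC r, ((b : GG r) ^ k)⁻¹ * (a * b) * b ^ k = a * b * P := by
  induction k with
  | zero => exact ⟨1, one_mem _, by simp⟩
  | succ k ih =>
    obtain ⟨P, hP, hconj⟩ := ih
    have hC : wordProg (c 0) (c 1) 0 r ∈ submonoidC r := wordProg_mem_closure _ _ _ _
    -- `b⁻¹(abP)b = ab · (b⁻¹Cb)(b⁻¹Pb)` since `b⁻¹ab = aC`
    refine ⟨b⁻¹ * wordProg (c 0) (c 1) 0 r * b * (b⁻¹ * P * b),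
      mul_mem (b_mem_conjStabilizer_submonoidC _ hC) (b_mem_conjStabilizer_submonoidC _ hP), ?_⟩
    rw [pow_succ, mul_inv_rev, ← commutator_a_b]
    calc (b⁻¹ * (b ^ k)⁻¹) * (a * b) * (b ^ k * b)
        = b⁻¹ * ((b ^ k)⁻¹ * (a * b) * b ^ k) * b := by group
      _ = _ := by rw [hconj]; group

theorem a_pow_mul_b_pow_mem_conjStabilizer_submonoidD (n : ℕ) :
    (a : GG r) ^ n * b ^ n ∈ (submonoidD r).conjStabilizer := by
  induction n with
  | zero => simp
  | succ n ih =>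
    obtain ⟨P, hP, hconj⟩ := exists_b_pow_conj_ab (r := r) n
    have hsplit : (a : GG r) ^ (n + 1) * b ^ (n + 1) = a ^ n * b ^ n * (a * b * P) := by
      rw [← hconj]; group
    rw [hsplit]
    exact mul_mem ih <|
      mul_mem ab_mem_conjStabilizer_submonoidD (submonoidC_le_conjStabilizer_submonoidD hP)

end GG

theorem conjugated_d1_positive_word_general (r : ℕ) (n : ℕ) :
    ((PresentedGroup.of (1 : Fin 6) : GG r) ^ n)⁻¹ *
        ((PresentedGroup.of (0 : Fin 6) : GG r) ^ n)⁻¹ *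
        PresentedGroup.of (4 : Fin 6) *
        PresentedGroup.of (0 : Fin 6) ^ n * PresentedGroup.of (1 : Fin 6) ^ n ∈
      Submonoid.closure
        ({(PresentedGroup.of (4 : Fin 6) : GG r), PresentedGroup.of (5 : Fin 6)} :
          Set (GG r)) ∧
    ((PresentedGroup.of (1 : Fin 6) : GG r) ^ n)⁻¹ *
        ((PresentedGroup.of (0 : Fin 6) : GG r) ^ n)⁻¹ *
        PresentedGroup.of (4 : Fin 6) *
        PresentedGroup.of (0 : Fin 6) ^ n * PresentedGroup.of (1 : Fin 6) ^ n ∈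
      Subgroup.closure
        ({(PresentedGroup.of (1 : Fin 6) : GG r), PresentedGroup.of (4 : Fin 6),
          PresentedGroup.of (5 : Fin 6)} : Set (GG r)) := by
  have hd : (GG.d 0 : GG r) ∈ GG.submonoidD r := Submonoid.subset_closure (by simp)
  have hmem : ((GG.b : GG r) ^ n)⁻¹ * (GG.a ^ n)⁻¹ * GG.d 0 * GG.a ^ n * GG.b ^ n ∈
      GG.submonoidD r := by
    simpa only [mul_inv_rev, mul_assoc] using
      GG.a_pow_mul_b_pow_mem_conjStabilizer_submonoidD n _ hd
  have hle : GG.submonoidD r ≤ (Subgroup.closure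
      ({(PresentedGroup.of (1 : Fin 6) : GG r), PresentedGroup.of (4 : Fin 6),
        PresentedGroup.of (5 : Fin 6)} : Set (GG r))).toSubmonoid :=
    Submonoid.closure_le.2 <| by
      rintro _ (rfl | rfl) <;> exact Subgroup.subset_closure (by simp [GG.d])
  exact ⟨hmem, hle hmem⟩

/-- For every `r ≥ 1` and `n ≥ 0`, the element `b⁻ⁿa⁻ⁿd₁aⁿbⁿ` of `G` lies in the
submonoid of `G` generated by `d₁, d₂`; in particular it lies in the subgroup
`H = ⟨b, d₁, d₂⟩` of `G`. -/
theorem conjugated_d1_positive_word (r : ℕ) (hr : 1 ≤ r) (n : ℕ) :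
    ((PresentedGroup.of (1 : Fin 6) : GG r) ^ n)⁻¹ *
        ((PresentedGroup.of (0 : Fin 6) : GG r) ^ n)⁻¹ *
        PresentedGroup.of (4 : Fin 6) *
        PresentedGroup.of (0 : Fin 6) ^ n * PresentedGroup.of (1 : Fin 6) ^ n ∈
      Submonoid.closure
        ({(PresentedGroup.of (4 : Fin 6) : GG r), PresentedGroup.of (5 : Fin 6)} :
          Set (GG r)) ∧
    ((PresentedGroup.of (1 : Fin 6) : GG r) ^ n)⁻¹ *
        ((PresentedGroup.of (0 : Fin 6) : GG r) ^ n)⁻¹ *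
        PresentedGroup.of (4 : Fin 6) *
        PresentedGroup.of (0 : Fin 6) ^ n * PresentedGroup.of (1 : Fin 6) ^ n ∈
      Subgroup.closure
        ({(PresentedGroup.of (1 : Fin 6) : GG r), PresentedGroup.of (4 : Fin 6),
          PresentedGroup.of (5 : Fin 6)} : Set (GG r)) :=
  conjugated_d1_positive_word_general r n
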